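/- Let P = (E, ρ) be a (q,m)-polymatroid with nullity function ν and conullity function ν*. Then P is a (q,m)-demi-polymatroid, and moreover both (E, ν) and (E, ν*) are (q,m)-demi-polymatroids. -/

import Mathlib

set_option linter.unusedSectionVars false

open Module Matrix

variable {F : Type*} [Field F] [Fintype F] {n : ℕ}

/-- The orthogonal complement of a subspace of `𝔽_q^n` with respect to the standard dot product. -/
def perp (X : Submodule F (Fin n → F)) : Submodule F (Fin n → F) where
  carrier := {x | ∀ y ∈ X, dotProduct x y = 0}
  add_mem' := fun {a b} ha hb y hy => by
    rw [Set.mem_setOf_eq] at *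
    rw [add_dotProduct, ha y hy, hb y hy, add_zero]
  zero_mem' := fun y hy => zero_dotProduct (v := y)
  smul_mem' := fun c a ha y hy => by
    rw [Set.mem_setOf_eq] at *
    rw [smul_dotProduct, ha y hy, smul_zero]

/-- The dual rank function `ρ*(X) = ρ(X^⊥) + m·dim X − ρ(E)`. -/
noncomputable def dualRho (m : ℕ) (rho : Submodule F (Fin n → F) → ℤ) (X : Submodule F (Fin n → F)) : ℤ :=
  rho (perp X) + (m : ℤ) * (finrank F X : ℤ) - rho ⊤

/-- The nullity function `ν(X) = m·dim X − ρ(X)`. -/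
noncomputable def nullity (m : ℕ) (rho : Submodule F (Fin n → F) → ℤ) (X : Submodule F (Fin n → F)) : ℤ :=
  (m : ℤ) * (finrank F X : ℤ) - rho X

/-- The conullity function `ν*(X) = ρ(E) − ρ(X^⊥)`. -/
def coNull (rho : Submodule F (Fin n → F) → ℤ) (X : Submodule F (Fin n → F)) : ℤ :=
  rho ⊤ - rho (perp X)

/-- The `r`-th generalized weight `d_r = min{dim X : ν*(X) ≥ r}`. -/
noncomputable def genW (rho : Submodule F (Fin n → F) → ℤ) (r : ℤ) : ℕ :=
  sInf {d : ℕ | ∃ X : Submodule F (Fin n → F), finrank F X = d ∧ r ≤ coNull rho X}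

/-- `h(x) = max{ν(X) : dim X = x}`. -/
noncomputable def hFun (m : ℕ) (rho : Submodule F (Fin n → F) → ℤ) (x : ℕ) : ℤ :=
  sSup {v : ℤ | ∃ X : Submodule F (Fin n → F), finrank F X = x ∧ v = nullity m rho X}

/-- `h*(x) = max{ν*(X) : dim X = x}`. -/
noncomputable def hStar (rho : Submodule F (Fin n → F) → ℤ) (x : ℕ) : ℤ :=
  sSup {v : ℤ | ∃ X : Submodule F (Fin n → F), finrank F X = x ∧ v = coNull rho X}

/-- A `(q,m)`-polymatroid on `E = 𝔽_q^n`. -/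
structure QMPolymatroid (F : Type*) [Field F] [Fintype F] (n m : ℕ) where
  rho : Submodule F (Fin n → F) → ℤ
  rho_nonneg : ∀ X, 0 ≤ rho X
  rho_le : ∀ X, rho X ≤ (m : ℤ) * (finrank F X : ℤ)
  rho_mono : ∀ ⦃X Y⦄, X ≤ Y → rho X ≤ rho Y
  rho_submodular : ∀ X Y, rho (X ⊔ Y) + rho (X ⊓ Y) ≤ rho X + rho Y

/-- A `(q,m)`-demi-polymatroid on `E = 𝔽_q^n`. -/
structure QMDemiPolymatroid (F : Type*) [Field F] [Fintype F] (n m : ℕ) where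
  rho : Submodule F (Fin n → F) → ℤ
  rho_nonneg : ∀ X, 0 ≤ rho X
  rho_le : ∀ X, rho X ≤ (m : ℤ) * (finrank F X : ℤ)
  rho_mono : ∀ ⦃X Y⦄, X ≤ Y → rho X ≤ rho Y
  dual_nonneg : ∀ X, 0 ≤ dualRho m rho X
  dual_le : ∀ X, dualRho m rho X ≤ (m : ℤ) * (finrank F X : ℤ)
  dual_mono : ∀ ⦃X Y⦄, X ≤ Y → dualRho m rho X ≤ dualRho m rho Y

section Codes

variable {m : ℕ}

/-- The row space of a matrix. -/
def rowSpace (A : Matrix (Fin m) (Fin n) F) : Submodule F (Fin n → F) :=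
  Submodule.span F (Set.range A)

theorem rowSpace_le_iff (A : Matrix (Fin m) (Fin n) F) (X : Submodule F (Fin n → F)) :
    rowSpace A ≤ X ↔ ∀ i, A i ∈ X := by
  rw [rowSpace, Submodule.span_le]; exact Set.range_subset_iff

/-- Matrices whose row space is contained in `X`. -/
def supportedOn (m : ℕ) (X : Submodule F (Fin n → F)) :
    Submodule F (Matrix (Fin m) (Fin n) F) where
  carrier := {A | rowSpace A ≤ X}
  add_mem' := fun {A B} hA hB => by
    rw [Set.mem_setOf_eq, rowSpace_le_iff] at *
    exact fun i => X.add_mem (hA i) (hB i)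
  zero_mem' := by
    rw [Set.mem_setOf_eq, rowSpace_le_iff]
    exact fun i => X.zero_mem
  smul_mem' := fun c A hA => by
    rw [Set.mem_setOf_eq, rowSpace_le_iff] at *
    exact fun i => X.smul_mem c (hA i)

/-- `C(X)`: the subspace of a Delsarte code `C` of matrices whose row space lies in `X`. -/
def subcode (C : Submodule F (Matrix (Fin m) (Fin n) F)) (X : Submodule F (Fin n → F)) :
    Submodule F (Matrix (Fin m) (Fin n) F) :=
  C ⊓ supportedOn m X

/-- The rank function `ρ_C(X) = dim C − dim C(X^⊥)` of a Delsarte code. -/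
noncomputable def rhoC (C : Submodule F (Matrix (Fin m) (Fin n) F))
    (X : Submodule F (Fin n → F)) : ℤ :=
  (finrank F C : ℤ) - (finrank F (subcode C (perp X)) : ℤ)

/-- The generalized weight `d_r(C) = min{dim X : dim C(X) ≥ r}` of a Delsarte code. -/
noncomputable def codeWeight (C : Submodule F (Matrix (Fin m) (Fin n) F)) (r : ℤ) : ℕ :=
  sInf {d : ℕ | ∃ X : Submodule F (Fin n → F),
    finrank F X = d ∧ r ≤ (finrank F (subcode C X) : ℤ)}

/-- The trace dual of a Delsarte code. -/
def traceDual (C : Submodule F (Matrix (Fin m) (Fin n) F)) :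
    Submodule F (Matrix (Fin m) (Fin n) F) where
  carrier := {N | ∀ M ∈ C, Matrix.trace (M * Nᵀ) = 0}
  add_mem' := fun {N₁ N₂} h1 h2 M hM => by
    rw [Matrix.transpose_add, Matrix.mul_add, Matrix.trace_add, h1 M hM, h2 M hM, add_zero]
  zero_mem' := fun M hM => by simp
  smul_mem' := fun c N hN M hM => by
    rw [Matrix.transpose_smul, Matrix.mul_smul, Matrix.trace_smul, hN M hM, smul_zero]

/-- The transposed code `Cᵀ = {Mᵗ : M ∈ C}` of a code of square matrices. -/
def transposeCode (C : Submodule F (Matrix (Fin n) (Fin n) F)) :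
    Submodule F (Matrix (Fin n) (Fin n) F) where
  carrier := {A | Aᵀ ∈ C}
  add_mem' := fun {A B} hA hB => by
    rw [Set.mem_setOf_eq, Matrix.transpose_add]; exact C.add_mem hA hB
  zero_mem' := by
    rw [Set.mem_setOf_eq, Matrix.transpose_zero]; exact C.zero_mem
  smul_mem' := fun c A hA => by
    rw [Set.mem_setOf_eq, Matrix.transpose_smul]; exact C.smul_mem c hA

/-- The maximum rank of a matrix in a subspace of matrices. -/
noncomputable def maxrank (A : Submodule F (Matrix (Fin m) (Fin n) F)) : ℕ :=
  sSup {r : ℕ | ∃ M ∈ A, M.rank = r}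

/-- An optimal anticode: a subspace `𝒜` of `𝕄` with `dim 𝒜 = m · maxrank 𝒜`. -/
def IsOptimalAnticode (A : Submodule F (Matrix (Fin m) (Fin n) F)) : Prop :=
  finrank F A = m * maxrank A

/-- Ravagnani's generalized weight `a_r(C)`. -/
noncomputable def aWeight (C : Submodule F (Matrix (Fin m) (Fin n) F)) (r : ℤ) : ℕ :=
  (sInf {d : ℕ | ∃ A : Submodule F (Matrix (Fin m) (Fin n) F),
    IsOptimalAnticode A ∧ finrank F A = d ∧ r ≤ (finrank F (A ⊓ C : Submodule F _) : ℤ)}) / m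

end Codes

/-! Both `ρ` and its nullity `ν = m·dim − ρ` are monotone: for `ν` this is submodularity applied
to `X` and a complement of `X` in `Y`. Any `σ` with `σ 0 = 0` for which `σ` and `ν_σ = m·dim − σ`
are monotone is a demi-polymatroid: its dual `σ*` is the conullity `ν_σ(E) − ν_σ(X^⊥)` of `ν_σ`,
and since `X ↦ X^⊥` is antitone with `dim X^⊥ = n − dim X`, taking conullities preserves these
three properties. They hold for `ρ`, for `ν`, and for `ν*`, whose nullity is the conullity
of `ν`. -/

section Perp

theorem perp_eq_comap_dualAnnihilator (X : Submodule F (Fin n → F)) :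
    perp X = X.dualAnnihilator.comap (dotProductEquiv F (Fin n)).toLinearMap := by
  ext x
  simp [perp, Submodule.mem_dualAnnihilator]

theorem finrank_add_finrank_perp (X : Submodule F (Fin n → F)) :
    finrank F X + finrank F (perp X) = n := by
  rw [perp_eq_comap_dualAnnihilator,
    LinearEquiv.finrank_eq (LinearEquiv.ofSubmodule' (dotProductEquiv F (Fin n)) _),
    Subspace.finrank_add_finrank_dualAnnihilator_eq, finrank_fin_fun]

theorem perp_antitone : Antitone (perp : Submodule F (Fin n → F) → Submodule F (Fin n → F)) :=
  fun _ _ hXY _ hx y hy => hx y (hXY hy)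

theorem perp_bot : perp (⊥ : Submodule F (Fin n → F)) = ⊤ :=
  eq_top_iff.2 fun x _ y hy => by rw [(Submodule.mem_bot F).1 hy, dotProduct_zero]

end Perp

section

variable {m : ℕ}

section RankFunctions

variable (σ : Submodule F (Fin n → F) → ℤ)

theorem nullity_nullity : nullity m (nullity m σ) = σ := by
  funext X
  simp only [nullity, sub_sub_cancel]

theorem coNull_bot : coNull σ ⊥ = 0 := by
  rw [coNull, perp_bot, sub_self]

variable {σ} in
theorem monotone_coNull (hσ : Monotone σ) : Monotone (coNull σ) :=
  fun _ _ hXY => sub_le_sub_left (hσ (perp_antitone hXY)) _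

theorem dualRho_eq_coNull_nullity : dualRho m σ = coNull (nullity m σ) := by
  funext X
  have hdim : (finrank F (perp X) : ℤ) = n - finrank F X := by
    have := finrank_add_finrank_perp X
    omega
  simp only [dualRho, coNull, nullity, hdim, finrank_top, finrank_fin_fun]
  ring

theorem nullity_coNull : nullity m (coNull σ) = coNull (nullity m σ) := by
  rw [← dualRho_eq_coNull_nullity]
  funext X
  simp only [nullity, coNull, dualRho]
  ring

variable {σ}

theorem nonneg_of_monotone (hbot : σ ⊥ = 0) (hσ : Monotone σ) (X : Submodule F (Fin n → F)) :
    0 ≤ σ X :=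
  hbot ▸ hσ bot_le

theorem le_mul_finrank_of_monotone_nullity (hbot : σ ⊥ = 0) (hν : Monotone (nullity m σ))
    (X : Submodule F (Fin n → F)) : σ X ≤ m * finrank F X := by
  have := hν (bot_le : ⊥ ≤ X)
  simp only [nullity, finrank_bot, hbot, Nat.cast_zero, mul_zero, sub_zero] at this
  linarith

end RankFunctions

def QMDemiPolymatroid.ofMonotone (σ : Submodule F (Fin n → F) → ℤ) (hbot : σ ⊥ = 0)
    (hσ : Monotone σ) (hν : Monotone (nullity m σ)) : QMDemiPolymatroid F n m where
  rho := σ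
  rho_nonneg := nonneg_of_monotone hbot hσ
  rho_le := le_mul_finrank_of_monotone_nullity hbot hν
  rho_mono := hσ
  dual_nonneg := by
    rw [dualRho_eq_coNull_nullity]
    exact nonneg_of_monotone (coNull_bot _) (monotone_coNull hν)
  dual_le := by
    rw [dualRho_eq_coNull_nullity]
    refine le_mul_finrank_of_monotone_nullity (coNull_bot _) ?_
    rw [nullity_coNull, nullity_nullity]
    exact monotone_coNull hσ
  dual_mono := by
    rw [dualRho_eq_coNull_nullity]
    exact monotone_coNull hν

namespace QMPolymatroid

variable (P : QMPolymatroid F n m)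

theorem rho_bot : P.rho ⊥ = 0 :=
  le_antisymm (by simpa using P.rho_le ⊥) (P.rho_nonneg ⊥)

theorem monotone_nullity : Monotone (nullity m P.rho) := by
  intro X Y hXY
  obtain ⟨W, hdisj, hsup⟩ := IsModularLattice.exists_disjoint_and_sup_eq hXY
  have hdim := Submodule.finrank_sup_add_finrank_inf_eq X W
  have hsub := P.rho_submodular X W
  rw [hdisj.eq_bot, hsup, finrank_bot, add_zero] at hdim
  rw [hdisj.eq_bot, hsup, P.rho_bot, add_zero] at hsub
  simp only [nullity, hdim, Nat.cast_add, mul_add]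
  linarith [P.rho_le W]

end QMPolymatroid

end

/-- every `(q,m)`-polymatroid is a `(q,m)`-demi-polymatroid, and its nullity
and conullity functions are rank functions of `(q,m)`-demi-polymatroids. -/
theorem polymatroid_nullity_conullity_demi {F : Type*} [Field F] [Fintype F] {n m : ℕ}
    (P : QMPolymatroid F n m) :
    (∃ D : QMDemiPolymatroid F n m, D.rho = P.rho) ∧
    (∃ D : QMDemiPolymatroid F n m, D.rho = nullity m P.rho) ∧
    (∃ D : QMDemiPolymatroid F n m, D.rho = coNull P.rho) := by
  have hν := P.monotone_nullity
  refine ⟨⟨.ofMonotone _ P.rho_bot P.rho_mono hν, rfl⟩,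
    ⟨.ofMonotone _ (by simp [nullity, P.rho_bot]) hν ?_, rfl⟩,
    ⟨.ofMonotone _ (coNull_bot _) (monotone_coNull P.rho_mono) ?_, rfl⟩⟩
  · rw [nullity_nullity]
    exact P.rho_mono
  · rw [nullity_coNull]
    exact monotone_coNull hν
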